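/- Let φ be a monotone E3CNF formula and let Δ ⊆ I_φ have minimum size among all subsets whose deletion leaves I_φ consistent with respect to Σ_{AB→C→B} = {AB → C, C → B}. Then for every variable x_j, Δ does not contain both tuples (x_j, 1, x_j) and (x_j, 0, x_j). -/

import Mathlib

/-- A functional dependency `X → Y` is a pair of attribute sets; two tuples form a
`φ`-conflict if they agree on every attribute of `X` but differ on some attribute of `Y`. -/
def IsPhiConflict {α V : Type*} (X Y : Finset α) (s t : α → V) : Prop :=
  (∀ a ∈ X, s a = t a) ∧ (∃ a ∈ Y, s a ≠ t a)

instance {α V : Type*} [DecidableEq V] (X Y : Finset α) (s t : α → V) :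
    Decidable (IsPhiConflict X Y s t) := by
  unfold IsPhiConflict; infer_instance

/-- Two tuples form a conflict w.r.t. a finite FD set if they form a `φ`-conflict
for some FD `φ` of the set. -/
def IsConflict {α V : Type*} (FDs : Finset (Finset α × Finset α)) (s t : α → V) : Prop :=
  ∃ fd ∈ FDs, IsPhiConflict fd.1 fd.2 s t

instance {α V : Type*} [DecidableEq V] (FDs : Finset (Finset α × Finset α)) (s t : α → V) :
    Decidable (IsConflict FDs s t) := by
  unfold IsConflict; infer_instance

/-- A set of tuples is consistent w.r.t. an FD set if no two of its tuples form a conflict. -/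
def Consistent {α V : Type*} (FDs : Finset (Finset α × Finset α)) (J : Finset (α → V)) : Prop :=
  ∀ s ∈ J, ∀ t ∈ J, ¬ IsConflict FDs s t

/-- `opt FDs I` is the minimum of `dist(J,I) = |I| - |J|` over all consistent subsets `J ⊆ I`. -/
noncomputable def opt {α V : Type*} (FDs : Finset (Finset α × Finset α))
    (I : Finset (α → V)) : ℕ :=
  sInf {d : ℕ | ∃ J ⊆ I, Consistent FDs J ∧ d = I.card - J.card}

/-- A monotone E3CNF formula with `n` variables and `m` clauses: each clause has exactly
three literals over pairwise distinct variables and is monotone, i.e. all its literals have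
the same polarity `pol i` (`true` = all positive, `false` = all negative). -/
structure MonotoneE3CNF (n m : ℕ) where
  lit : Fin m → Fin 3 → Fin n
  pol : Fin m → Bool
  distinct : ∀ i, Function.Injective (lit i)

/-- The number of clauses satisfied by assignment `τ`. -/
def MonotoneE3CNF.numSat {n m : ℕ} (φ : MonotoneE3CNF n m) (τ : Fin n → Bool) : ℕ :=
  (Finset.univ.filter fun i : Fin m => ∃ k, τ (φ.lit i k) = φ.pol i).card

/-- `#τ_max(φ)`: the maximum number of simultaneously satisfiable clauses. -/
def MonotoneE3CNF.maxSat {n m : ℕ} (φ : MonotoneE3CNF n m) : ℕ :=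
  Finset.univ.sup fun τ : Fin n → Bool => φ.numSat τ

/-- Values used in the instance `I_φ`: clause constants `c_i`, variable constants `x_j`,
and the two Boolean values; all pairwise distinct. -/
abbrev Val2 (n m : ℕ) := Sum (Fin m) (Sum (Fin n) Bool)

/-- The two tuples `(x_j, 1, x_j)` and `(x_j, 0, x_j)` built for variable `x_j`. -/
def varTuple {n m : ℕ} (j : Fin n) (b : Bool) : Fin 3 → Val2 n m :=
  ![Sum.inr (Sum.inl j), Sum.inr (Sum.inr b), Sum.inr (Sum.inl j)]

/-- The tuple built for the `k`-th literal of clause `i`: `(c_i, 1, x_j)` if the variable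
`j = lit i k` occurs positively in clause `i`, `(c_i, 0, x_j)` if it occurs negatively. -/
def clauseTuple {n m : ℕ} (φ : MonotoneE3CNF n m) (i : Fin m) (k : Fin 3) : Fin 3 → Val2 n m :=
  ![Sum.inl i, Sum.inr (Sum.inr (φ.pol i)), Sum.inr (Sum.inl (φ.lit i k))]

/-- The instance `I_φ` over attributes `A = 0`, `B = 1`, `C = 2`. -/
def Iphi2 {n m : ℕ} (φ : MonotoneE3CNF n m) : Finset (Fin 3 → Val2 n m) :=
  (Finset.univ.image fun p : Fin n × Bool => varTuple p.1 p.2) ∪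
    (Finset.univ.image fun p : Fin m × Fin 3 => clauseTuple φ p.1 p.2)

/-- The FD set `Σ_{AB→C→B} = {AB → C, C → B}`. -/
def Sigma2 : Finset (Finset (Fin 3) × Finset (Fin 3)) := {({0, 1}, {2}), ({2}, {1})}

/-!
If both tuples `(x_j, 1, x_j)` and `(x_j, 0, x_j)` were deleted, minimality would force each of
them to conflict with a surviving tuple. Apart from its (deleted) twin, the only tuples in conflict
with `(x_j, b, x_j)` are the clause tuples `(c_i, ¬b, x_j)`. This yields two surviving clause tuples with the same `C`-value and
different `B`-values, which violate `C → B`.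
-/

section Repair

variable {α V : Type*}

theorem IsPhiConflict.symm {X Y : Finset α} {s t : α → V} (h : IsPhiConflict X Y s t) :
    IsPhiConflict X Y t s :=
  ⟨fun a ha => (h.1 a ha).symm, h.2.imp fun _ ⟨ha, hne⟩ => ⟨ha, hne.symm⟩⟩

theorem IsConflict.symm {FDs : Finset (Finset α × Finset α)} {s t : α → V}
    (h : IsConflict FDs s t) : IsConflict FDs t s :=
  h.imp fun _ ⟨hfd, hc⟩ => ⟨hfd, hc.symm⟩

theorem not_isConflict_self (FDs : Finset (Finset α × Finset α)) (t : α → V) :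
    ¬ IsConflict FDs t t :=
  fun ⟨_, _, _, _, _, hne⟩ => hne rfl

variable [DecidableEq (α → V)] {FDs : Finset (Finset α × Finset α)}

theorem Consistent.insert {J : Finset (α → V)} {t : α → V} (hJ : Consistent FDs J)
    (ht : ∀ s ∈ J, ¬ IsConflict FDs t s) : Consistent FDs (insert t J) := by
  intro s hs u hu hc
  rw [Finset.mem_insert] at hs hu
  rcases hs with rfl | hs
  · rcases hu with rfl | hu
    · exact not_isConflict_self FDs _ hc
    · exact ht u hu hc
  · rcases hu with rfl | hu
    · exact ht s hs hc.symm
    · exact hJ s hs u hu hc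

theorem exists_isConflict_of_mem_minimal {I Δ : Finset (α → V)} (hΔ : Δ ⊆ I)
    (hcons : Consistent FDs (I \ Δ))
    (hmin : ∀ Δ' ⊆ I, Consistent FDs (I \ Δ') → Δ.card ≤ Δ'.card) {t : α → V} (ht : t ∈ Δ) :
    ∃ s ∈ I \ Δ, IsConflict FDs t s := by
  by_contra! hfree
  have hle := hmin _ ((Finset.erase_subset t Δ).trans hΔ)
    (Finset.sdiff_erase (hΔ ht) ▸ hcons.insert hfree)
  exact (Finset.card_erase_lt_of_mem ht).not_ge hle

end Repair

section Reduction

variable {n m : ℕ} {φ : MonotoneE3CNF n m}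

theorem isConflict_sigma2_iff {V : Type*} (s t : Fin 3 → V) :
    IsConflict Sigma2 s t ↔ (s 0 = t 0 ∧ s 1 = t 1 ∧ s 2 ≠ t 2) ∨ (s 2 = t 2 ∧ s 1 ≠ t 1) := by
  simp [IsConflict, Sigma2, IsPhiConflict, and_assoc]

theorem mem_Iphi2 {s : Fin 3 → Val2 n m} :
    s ∈ Iphi2 φ ↔ (∃ j b, s = varTuple j b) ∨ ∃ i k, s = clauseTuple φ i k := by
  simp [Iphi2, eq_comm]

theorem eq_of_isConflict_varTuple {j : Fin n} {b : Bool} {s : Fin 3 → Val2 n m}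
    (hs : s ∈ Iphi2 φ) (hc : IsConflict Sigma2 (varTuple j b) s) :
    s = varTuple j (!b) ∨ ∃ i k, s = clauseTuple φ i k ∧ φ.lit i k = j ∧ φ.pol i = !b := by
  rw [isConflict_sigma2_iff] at hc
  rcases mem_Iphi2.1 hs with ⟨j', b', rfl⟩ | ⟨i, k, rfl⟩
  · left
    cases b <;> cases b' <;> simp_all [varTuple]
  · right
    refine ⟨i, k, rfl, ?_⟩
    cases b <;> cases hp : φ.pol i <;> simp_all [varTuple, clauseTuple]

theorem isConflict_clauseTuple {i i' : Fin m} {k k' : Fin 3} (hlit : φ.lit i k = φ.lit i' k')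
    (hpol : φ.pol i ≠ φ.pol i') : IsConflict Sigma2 (clauseTuple φ i k) (clauseTuple φ i' k') := by
  rw [isConflict_sigma2_iff]
  simp [clauseTuple, hlit, hpol]

end Reduction

/-- If `Δ ⊆ I_φ` has minimum size among all subsets of `I_φ` whose deletion leaves `I_φ`
consistent w.r.t. `Σ_{AB→C→B} = {AB → C, C → B}`, then for every variable `x_j`,
`Δ` does not contain both tuples `(x_j, 1, x_j)` and `(x_j, 0, x_j)`. -/
theorem stmt4 {n m : ℕ} (φ : MonotoneE3CNF n m)
    (Δ : Finset (Fin 3 → Val2 n m)) (hΔ : Δ ⊆ Iphi2 φ)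
    (hcons : Consistent Sigma2 (Iphi2 φ \ Δ))
    (hmin : ∀ Δ' ⊆ Iphi2 φ, Consistent Sigma2 (Iphi2 φ \ Δ') → Δ.card ≤ Δ'.card) :
    ∀ j : Fin n, ¬ ((varTuple j true ∈ Δ) ∧ (varTuple j false ∈ Δ)) := by
  rintro j ⟨htrue, hfalse⟩
  have hboth : ∀ b, varTuple j b ∈ Δ := by
    intro b
    cases b <;> assumption
  have hwitness : ∀ b, ∃ i k, clauseTuple φ i k ∈ Iphi2 φ \ Δ ∧ φ.lit i k = j ∧ φ.pol i = !b := by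
    intro b
    obtain ⟨s, hs, hc⟩ := exists_isConflict_of_mem_minimal hΔ hcons hmin (hboth b)
    rcases eq_of_isConflict_varTuple (Finset.mem_sdiff.1 hs).1 hc with rfl | ⟨i, k, rfl, hik⟩
    · exact absurd (hboth !b) (Finset.mem_sdiff.1 hs).2
    · exact ⟨i, k, hs, hik⟩
  obtain ⟨i, k, hmem, hlit, hpol⟩ := hwitness true
  obtain ⟨i', k', hmem', hlit', hpol'⟩ := hwitness false
  exact hcons _ hmem _ hmem' (isConflict_clauseTuple (hlit.trans hlit'.symm) (by simp [hpol, hpol']))
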